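/- arXiv:2104.09404 — 5 statements merged into one kernel-verified Lean document; each statement's English description precedes it below -/
import Mathlib

section
/- For the block lower bidiagonal matrix A with identity blocks I on the diagonal and blocks -Φ on the subdiagonal (with Φ an N×N matrix and Nt diagonal blocks), the Schur complement of the submatrix corresponding to coarse nodes spaced every m steps is again block lower bidiagonal with identity blocks on the diagonal and blocks -Φ^m on the subdiagonal. -/
/-- Embedding of coarse node indices (spaced every `m`) into the time grid. -/
def coarseEmb (Nc m Nt : ℕ) (hNt : Nt = Nc * m + 1) (i : Fin (Nc + 1)) : Fin Nt :=
  ⟨i.val * m, by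
    have h1 : i.val ≤ Nc := Nat.lt_succ_iff.mp i.isLt
    have h2 : i.val * m ≤ Nc * m := Nat.mul_le_mul_right m h1
    rw [hNt]; exact Nat.lt_succ_of_le h2⟩

/-- Embedding of fine node indices (chunk `i`, position `j` within chunk) into the time grid. -/
def fineEmb (Nc m Nt : ℕ) (hNt : Nt = Nc * m + 1) (p : Fin Nc × Fin (m - 1)) : Fin Nt :=
  ⟨p.1.val * m + p.2.val + 1, by
    have h2 : p.2.val + 1 < m := by have := p.2.isLt; omega
    have h3 : p.1.val * m + p.2.val + 1 < (p.1.val + 1) * m := by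
      have h : (p.1.val + 1) * m = p.1.val * m + m := by ring
      omega
    have h4 : (p.1.val + 1) * m ≤ Nc * m := Nat.mul_le_mul_right m p.1.isLt
    rw [hNt]; exact Nat.lt_succ_of_le (le_of_lt (lt_of_lt_of_le h3 h4))⟩

/-!
In `N × N` blocks (`Matrix.comp`), every submatrix of `A` is a `stepBlocks` matrix of the time
labels of its rows and columns. The fine nodes form `Nc` chunks of `m - 1` consecutive times, so
`A_FF` is block diagonal with bidiagonal blocks, whose inverse is the lower triangular Toeplitz
matrix of the powers `Φ ^ (i - j)`. The only fine–coarse couplings go from coarse node `k` to the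
first fine node of chunk `k` and from the last fine node of chunk `k` to coarse node `k + 1`, so
`A_CF A_FF⁻¹ A_FC` is `(-Φ) Φ ^ (m - 2) (-Φ) = Φ ^ m` on the coarse subdiagonal and zero elsewhere;
for `m ≥ 2` no two coarse nodes are adjacent, so `A_CC = 1`.
-/

open Matrix

theorem Matrix.comp_mul_comp {I J J' K R : Type*} [Fintype J] [Fintype K]
    [NonUnitalNonAssocSemiring R] (M : Matrix I J (Matrix K K R))
    (M' : Matrix J J' (Matrix K K R)) :
    comp I J K K R M * comp J J' K K R M' = comp I J' K K R (M * M') := by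
  ext ⟨i, k⟩ ⟨j, l⟩
  simp only [comp_apply, mul_apply, Fintype.sum_prod_type, sum_apply]

theorem Nat.lt_trichotomy_mul_right (k l m : ℕ) :
    (k < l ∧ k * m + m ≤ l * m) ∨ (k = l ∧ k * m = l * m) ∨
      (l < k ∧ l * m + m ≤ k * m) := by
  rcases lt_trichotomy k l with h | rfl | h
  · exact Or.inl ⟨h, by simpa [Nat.succ_mul] using Nat.mul_le_mul_right m h⟩
  · exact Or.inr (Or.inl ⟨rfl, rfl⟩)
  · exact Or.inr (Or.inr ⟨h, by simpa [Nat.succ_mul] using Nat.mul_le_mul_right m h⟩)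

/-- The one-step recurrence matrix with block rows at the times `τ` and block columns at the
times `σ`; `A` itself is `comp` of `stepBlocks Φ Fin.val Fin.val`. -/
def stepBlocks {R ι κ : Type*} [Zero R] [One R] [Neg R] (Φ : R) (τ : ι → ℕ) (σ : κ → ℕ) :
    Matrix ι κ R :=
  of fun i j => if τ i = σ j then 1 else if τ i = σ j + 1 then -Φ else 0

section StepBlocks

variable {R : Type*} [Ring R]

theorem comp_stepBlocks_val_apply {n : Type*} [Fintype n] [DecidableEq n] {T : ℕ}
    (Ψ : Matrix n n R) (p q : Fin T × n) :
    comp _ _ _ _ _ (stepBlocks Ψ (Fin.val : Fin T → ℕ) Fin.val) p q =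
      if p.1 = q.1 then (if p.2 = q.2 then 1 else 0)
      else if p.1.val = q.1.val + 1 then -Ψ p.2 q.2 else 0 := by
  simp only [comp_apply, stepBlocks, of_apply, Fin.val_inj]
  split_ifs <;> simp [one_apply, *]

def powToeplitz (Φ : R) (n : ℕ) : Matrix (Fin n) (Fin n) R :=
  of fun i j => if j ≤ i then Φ ^ (i - j : ℕ) else 0

theorem stepBlocks_val_mul_powToeplitz (Φ : R) (n : ℕ) :
    stepBlocks Φ (Fin.val : Fin n → ℕ) Fin.val * powToeplitz Φ n = 1 := by
  ext i j
  rw [mul_apply]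
  cases n with
  | zero => exact i.elim0
  | succ n =>
    induction i using Fin.cases with
    | zero =>
      rw [Fintype.sum_eq_single 0 fun k hk => by
        rw [Ne, Fin.ext_iff, Fin.val_zero] at hk
        simp [stepBlocks, Ne.symm hk]]
      simp [stepBlocks, powToeplitz, one_apply, eq_comm]
    | succ i =>
      rw [Fintype.sum_eq_add i.succ i.castSucc Fin.castSucc_lt_succ.ne' fun k hk => by
        simp only [Ne, Fin.ext_iff, Fin.val_succ, Fin.val_castSucc] at hk
        simp only [stepBlocks, of_apply, Fin.val_succ]
        rw [if_neg (by omega), if_neg (by omega), zero_mul]]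
      simp only [stepBlocks, powToeplitz, of_apply, Fin.val_succ, Fin.val_castSucc,
        Fin.le_iff_val_le_val, if_true, Nat.succ_ne_self, if_false, one_mul]
      rcases lt_trichotomy (j : ℕ) (i + 1) with h | h | h
      · rw [if_pos h.le, if_pos (by omega), one_apply_ne (Fin.ne_of_val_ne (by simp; omega)),
          show (i : ℕ) + 1 - j = i - j + 1 by omega, pow_succ', neg_mul, add_neg_cancel]
      · obtain rfl : j = i.succ := Fin.ext (by simp [h])
        simp
      · rw [if_neg (by omega), if_neg (by omega),
          one_apply_ne (Fin.ne_of_val_ne (by simp; omega))]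
        simp

/-- `(fineEmb Nc m Nt hNt x).val`, without the dependence on `Nt`. -/
def fineTime (Nc m : ℕ) (x : Fin Nc × Fin (m - 1)) : ℕ := x.1 * m + x.2 + 1

/-- `(coarseEmb Nc m Nt hNt k).val`, without the dependence on `Nt`. -/
def coarseTime (Nc m : ℕ) (k : Fin (Nc + 1)) : ℕ := k * m

variable {Nc m : ℕ}

theorem stepBlocks_fineTime_fineTime (Φ : R) :
    stepBlocks Φ (fineTime Nc m) (fineTime Nc m) =
      comp _ _ _ _ _
        (diagonal fun _ : Fin Nc => stepBlocks Φ (Fin.val : Fin (m - 1) → ℕ) Fin.val) := by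
  ext ⟨k, i⟩ ⟨l, j⟩
  have := i.isLt; have := j.isLt
  unfold fineTime
  rw [comp_apply]
  rcases eq_or_ne k l with rfl | hkl
  · simp only [diagonal_apply_eq, stepBlocks, of_apply]
    split_ifs <;> first | rfl | omega
  · have := Fin.val_ne_of_ne hkl
    simp only [diagonal_apply_ne _ hkl, Matrix.zero_apply, stepBlocks, of_apply]
    rcases Nat.lt_trichotomy_mul_right k l m with h | h | h <;>
      split_ifs <;> first | rfl | omega

theorem stepBlocks_fineTime_coarseTime_apply (Φ : R) (x : Fin Nc × Fin (m - 1))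
    (q : Fin (Nc + 1)) :
    stepBlocks Φ (fineTime Nc m) (coarseTime Nc m) x q =
      if x.1.castSucc = q ∧ (x.2 : ℕ) = 0 then -Φ else 0 := by
  have := x.2.isLt
  unfold fineTime coarseTime
  simp only [stepBlocks, of_apply, Fin.ext_iff, Fin.val_castSucc]
  rcases Nat.lt_trichotomy_mul_right x.1 q m with h | h | h <;>
    split_ifs <;> first | rfl | omega

theorem stepBlocks_coarseTime_fineTime_apply (Φ : R) (p : Fin (Nc + 1))
    (x : Fin Nc × Fin (m - 1)) :
    stepBlocks Φ (coarseTime Nc m) (fineTime Nc m) p x =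
      if p = x.1.succ ∧ (x.2 : ℕ) + 2 = m then -Φ else 0 := by
  have := x.2.isLt
  have : ((x.1 : ℕ) + 1) * m = x.1 * m + m := Nat.succ_mul ..
  unfold fineTime coarseTime
  simp only [stepBlocks, of_apply, Fin.ext_iff, Fin.val_succ]
  rcases Nat.lt_trichotomy_mul_right p (x.1 + 1) m with h | h | h <;>
    split_ifs <;> first | rfl | omega

theorem stepBlocks_coarseTime_coarseTime (hm : 1 < m) (Φ : R) :
    stepBlocks Φ (coarseTime Nc m) (coarseTime Nc m) =
      (1 : Matrix (Fin (Nc + 1)) (Fin (Nc + 1)) R) := by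
  ext p q
  unfold coarseTime
  simp only [stepBlocks, of_apply, one_apply, Fin.ext_iff]
  rcases Nat.lt_trichotomy_mul_right p q m with h | h | h <;>
    split_ifs <;> first | rfl | omega

def fineInv (Φ : R) (Nc m : ℕ) : Matrix (Fin Nc × Fin (m - 1)) (Fin Nc × Fin (m - 1)) R :=
  comp _ _ _ _ _ (diagonal fun _ : Fin Nc => powToeplitz Φ (m - 1))

theorem stepBlocks_fineTime_mul_fineInv (Φ : R) :
    stepBlocks Φ (fineTime Nc m) (fineTime Nc m) * fineInv Φ Nc m = 1 := by
  rw [stepBlocks_fineTime_fineTime, fineInv, comp_mul_comp, diagonal_mul_diagonal,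
    stepBlocks_val_mul_powToeplitz, diagonal_one, comp_one]

theorem fineInv_mul_stepBlocks_fineTime_coarseTime (Φ : R) :
    fineInv Φ Nc m * stepBlocks Φ (fineTime Nc m) (coarseTime Nc m) =
      of fun x q => if x.1.castSucc = q then -Φ ^ ((x.2 : ℕ) + 1) else 0 := by
  ext x q
  rw [mul_apply, of_apply]
  induction q using Fin.lastCases with
  | last =>
    simp [stepBlocks_fineTime_coarseTime_apply, Fin.castSucc_ne_last]
  | cast k =>
    rw [Fintype.sum_eq_single (k, ⟨0, x.2.pos⟩) fun y hy => ?_]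
    · rw [stepBlocks_fineTime_coarseTime_apply, if_pos ⟨rfl, rfl⟩, fineInv, comp_apply,
        diagonal_apply]
      simp only [Fin.castSucc_inj]
      split_ifs
      · rw [powToeplitz, of_apply, if_pos (Fin.mk_le_of_le_val (Nat.zero_le _)),
          Fin.val_mk, Nat.sub_zero, pow_succ, mul_neg]
      · simp
    · rw [stepBlocks_fineTime_coarseTime_apply, if_neg, mul_zero]
      rintro ⟨h1, h2⟩
      exact hy (Prod.ext (Fin.castSucc_injective _ h1) (Fin.ext h2))

theorem stepBlocks_coarseTime_fineTime_mul_fineInv_mul (hm : 1 < m) (Φ : R) :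
    stepBlocks Φ (coarseTime Nc m) (fineTime Nc m) * fineInv Φ Nc m *
        stepBlocks Φ (fineTime Nc m) (coarseTime Nc m) =
      of fun p q : Fin (Nc + 1) => if (p : ℕ) = q + 1 then Φ ^ m else 0 := by
  rw [Matrix.mul_assoc, fineInv_mul_stepBlocks_fineTime_coarseTime]
  ext p q
  rw [mul_apply, of_apply]
  induction p using Fin.cases with
  | zero =>
    simp [stepBlocks_coarseTime_fineTime_apply, (Fin.succ_ne_zero _).symm]
  | succ k =>
    rw [Fintype.sum_eq_single (k, ⟨m - 2, by omega⟩) fun y hy => ?_]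
    · simp only [stepBlocks_coarseTime_fineTime_apply, Fin.ext_iff, Fin.val_castSucc,
        Fin.val_succ, show m - 2 + 2 = m by omega, and_self, if_true, of_apply, add_left_inj]
      split_ifs
      · simp only [neg_mul, mul_neg, neg_neg]
        rw [← pow_succ', show m - 2 + 1 + 1 = m by omega]
      · simp
    · rw [stepBlocks_coarseTime_fineTime_apply, if_neg, zero_mul]
      rintro ⟨h1, h2⟩
      exact hy (Prod.ext (Fin.succ_injective _ h1).symm (Fin.ext (by simp; omega)))

theorem stepBlocks_coarseTime_sub_mul_fineInv_mul (hm : 0 < m) (Φ : R) :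
    stepBlocks Φ (coarseTime Nc m) (coarseTime Nc m) -
        stepBlocks Φ (coarseTime Nc m) (fineTime Nc m) * fineInv Φ Nc m *
          stepBlocks Φ (fineTime Nc m) (coarseTime Nc m) =
      stepBlocks (Φ ^ m) (Fin.val : Fin (Nc + 1) → ℕ) Fin.val := by
  rcases (by omega : m = 1 ∨ 1 < m) with rfl | hm
  · have : IsEmpty (Fin Nc × Fin (1 - 1)) := inferInstanceAs (IsEmpty (Fin Nc × Fin 0))
    rw [Subsingleton.elim (stepBlocks Φ (coarseTime Nc 1) (fineTime Nc 1)) 0, Matrix.zero_mul,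
      Matrix.zero_mul, sub_zero, pow_one,
      show coarseTime Nc 1 = Fin.val from funext fun k => mul_one _]
  · rw [stepBlocks_coarseTime_coarseTime hm, stepBlocks_coarseTime_fineTime_mul_fineInv_mul hm]
    ext p q
    simp only [stepBlocks, Matrix.sub_apply, one_apply, of_apply, Fin.ext_iff]
    split_ifs <;> first | omega | simp

end StepBlocks

/-- For the block lower bidiagonal matrix `A` with identity diagonal blocks and `-Φ`
subdiagonal blocks, the Schur complement of the fine-node submatrix (coarse nodes spaced
every `m` time steps) is again block lower bidiagonal with identity diagonal blocks and
`-Φ^m` subdiagonal blocks. -/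
theorem schur_complement_of_spaceTime_matrix
    (N Nc m : ℕ) (hm : 0 < m) (Φ : Matrix (Fin N) (Fin N) ℝ)
    (Nt : ℕ) (hNt : Nt = Nc * m + 1)
    (A : Matrix (Fin Nt × Fin N) (Fin Nt × Fin N) ℝ)
    (hA : ∀ p q, A p q =
      if p.1 = q.1 then (if p.2 = q.2 then (1 : ℝ) else 0)
      else if p.1.val = q.1.val + 1 then -Φ p.2 q.2 else 0)
    (AFF : Matrix ((Fin Nc × Fin (m - 1)) × Fin N) ((Fin Nc × Fin (m - 1)) × Fin N) ℝ)
    (hAFF : ∀ p q, AFF p q = A (fineEmb Nc m Nt hNt p.1, p.2) (fineEmb Nc m Nt hNt q.1, q.2))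
    (AFC : Matrix ((Fin Nc × Fin (m - 1)) × Fin N) (Fin (Nc + 1) × Fin N) ℝ)
    (hAFC : ∀ p q, AFC p q = A (fineEmb Nc m Nt hNt p.1, p.2) (coarseEmb Nc m Nt hNt q.1, q.2))
    (ACF : Matrix (Fin (Nc + 1) × Fin N) ((Fin Nc × Fin (m - 1)) × Fin N) ℝ)
    (hACF : ∀ p q, ACF p q = A (coarseEmb Nc m Nt hNt p.1, p.2) (fineEmb Nc m Nt hNt q.1, q.2))
    (ACC : Matrix (Fin (Nc + 1) × Fin N) (Fin (Nc + 1) × Fin N) ℝ)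
    (hACC : ∀ p q, ACC p q = A (coarseEmb Nc m Nt hNt p.1, p.2) (coarseEmb Nc m Nt hNt q.1, q.2)) :
    ∀ p q, (ACC - ACF * AFF⁻¹ * AFC) p q =
      if p.1 = q.1 then (if p.2 = q.2 then (1 : ℝ) else 0)
      else if p.1.val = q.1.val + 1 then -(Φ ^ m) p.2 q.2 else 0 := by
  obtain rfl : A = comp _ _ _ _ _ (stepBlocks Φ (Fin.val : Fin Nt → ℕ) Fin.val) :=
    ext fun p q => by rw [hA, comp_stepBlocks_val_apply]
  have hFF : AFF = comp _ _ _ _ _ (stepBlocks Φ (fineTime Nc m) (fineTime Nc m)) := ext hAFF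
  have hFC : AFC = comp _ _ _ _ _ (stepBlocks Φ (fineTime Nc m) (coarseTime Nc m)) := ext hAFC
  have hCF : ACF = comp _ _ _ _ _ (stepBlocks Φ (coarseTime Nc m) (fineTime Nc m)) := ext hACF
  have hCC : ACC = comp _ _ _ _ _ (stepBlocks Φ (coarseTime Nc m) (coarseTime Nc m)) := ext hACC
  have hinv : AFF⁻¹ = comp _ _ _ _ _ (fineInv Φ Nc m) :=
    inv_eq_right_inv (by rw [hFF, comp_mul_comp, stepBlocks_fineTime_mul_fineInv, comp_one])
  have hS : ACC - ACF * AFF⁻¹ * AFC =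
      comp _ _ _ _ _ (stepBlocks (Φ ^ m) (Fin.val : Fin (Nc + 1) → ℕ) Fin.val) := by
    rw [hinv, hCC, hCF, hFC, comp_mul_comp, comp_mul_comp,
      ← stepBlocks_coarseTime_sub_mul_fineInv_mul hm]
    rfl
  intro p q
  rw [hS, comp_stepBlocks_val_apply]
end

section
/- The block matrix A_FF obtained by restricting the space-time system matrix A (identity diagonal blocks, -Φ subdiagonal blocks) to the fine nodes, when fine nodes are grouped by time chunks of length m-1 between consecutive coarse nodes, is block diagonal with each diagonal block being the (m-1)×(m-1) block lower bidiagonal matrix B_Φ with identity on the diagonal and -Φ on the subdiagonal; in particular A_FF is invertible. -/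
theorem Nat.eq_and_eq_of_mul_add_eq_mul_add {m i i' j j' : ℕ} (hj : j < m) (hj' : j' < m)
    (h : i * m + j = i' * m + j') : i = i' ∧ j = j' := by
  have hm : 0 < m := by omega
  have hi : i = i' := by
    simpa [Nat.add_comm _ j, Nat.add_comm _ j', Nat.add_mul_div_right _ _ hm,
      Nat.div_eq_of_lt hj, Nat.div_eq_of_lt hj'] using congrArg (· / m) h
  exact ⟨hi, by subst hi; omega⟩

section fineEmb

variable {Nc m Nt : ℕ} {hNt : Nt = Nc * m + 1}

theorem fineEmb_inj {p q : Fin Nc × Fin (m - 1)} :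
    fineEmb Nc m Nt hNt p = fineEmb Nc m Nt hNt q ↔ p = q := by
  refine ⟨fun h => ?_, congrArg _⟩
  have hv : p.1.val * m + p.2.val + 1 = q.1.val * m + q.2.val + 1 := congrArg Fin.val h
  obtain ⟨h1, h2⟩ := Nat.eq_and_eq_of_mul_add_eq_mul_add (m := m)
    (by have := p.2.isLt; omega) (by have := q.2.isLt; omega) (Nat.add_right_cancel hv)
  exact Prod.ext (Fin.ext h1) (Fin.ext h2)

theorem fineEmb_val_eq_succ_iff {p q : Fin Nc × Fin (m - 1)} :
    (fineEmb Nc m Nt hNt p).val = (fineEmb Nc m Nt hNt q).val + 1 ↔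
      p.1 = q.1 ∧ p.2.val = q.2.val + 1 := by
  refine ⟨fun h => ?_, fun ⟨hi, hj⟩ => ?_⟩
  · have hv : p.1.val * m + p.2.val + 1 = q.1.val * m + (q.2.val + 1) + 1 := by
      rw [← Nat.add_assoc]; exact h
    obtain ⟨h1, h2⟩ := Nat.eq_and_eq_of_mul_add_eq_mul_add (m := m)
      (by have := p.2.isLt; omega) (by have := q.2.isLt; omega) (Nat.add_right_cancel hv)
    exact ⟨Fin.ext h1, h2⟩
  · change p.1.val * m + p.2.val + 1 = q.1.val * m + q.2.val + 1 + 1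
    rw [hi, hj, Nat.add_assoc _ q.2.val 1]

end fineEmb

namespace Matrix

variable {R ι : Type*} [DecidableEq ι]

def blockBidiagonal [Zero R] [One R] [Neg R] (n : ℕ) (Φ : Matrix ι ι R) :
    Matrix (Fin n × ι) (Fin n × ι) R :=
  fun p q => if p.1 = q.1 then (if p.2 = q.2 then 1 else 0)
    else if p.1.val = q.1.val + 1 then -Φ p.2 q.2 else 0

theorem blockBidiagonal_blockTriangular [Zero R] [One R] [Neg R] (n : ℕ) (Φ : Matrix ι ι R) :
    (blockBidiagonal n Φ).BlockTriangular fun p => OrderDual.toDual p.1 := by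
  intro p q hpq
  have hlt : p.1.val < q.1.val := hpq
  simp only [blockBidiagonal, Fin.ext_iff, hlt.ne, if_false]
  rw [if_neg (by omega)]

theorem det_blockBidiagonal [CommRing R] [Fintype ι] (n : ℕ) (Φ : Matrix ι ι R) :
    (blockBidiagonal n Φ).det = 1 := by
  rw [(blockBidiagonal_blockTriangular n Φ).det]
  refine Finset.prod_eq_one fun k _ => ?_
  have hblock : (blockBidiagonal n Φ).toSquareBlock (fun p => OrderDual.toDual p.1) k = 1 := by
    ext ⟨p, hp⟩ ⟨q, hq⟩
    have hpq : p.1 = q.1 := hp.trans hq.symm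
    simp [toSquareBlock_def, blockBidiagonal, one_apply, hpq, Prod.ext_iff]
  rw [hblock, det_one]

theorem blockBidiagonal_fineEmb_apply [Zero R] [One R] [Neg R] {Nc m Nt : ℕ}
    (hNt : Nt = Nc * m + 1) (Φ : Matrix ι ι R) (i i' : Fin Nc) (j j' : Fin (m - 1)) (a b : ι) :
    blockBidiagonal Nt Φ (fineEmb Nc m Nt hNt (i, j), a) (fineEmb Nc m Nt hNt (i', j'), b) =
      if i = i' then blockBidiagonal (m - 1) Φ (j, a) (j', b) else 0 := by
  by_cases hii : i = i'
  · subst hii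
    simp [blockBidiagonal, fineEmb_inj, fineEmb_val_eq_succ_iff]
  · simp [blockBidiagonal, fineEmb_inj, fineEmb_val_eq_succ_iff, hii]

theorem det_eq_det_pow_card_of_apply_eq_ite [CommRing R] {κ α β : Type*} [Fintype κ]
    [DecidableEq κ] [Fintype α] [DecidableEq α] [Fintype β] [DecidableEq β]
    (M : Matrix ((κ × α) × β) ((κ × α) × β) R) (B : Matrix (α × β) (α × β) R)
    (hM : ∀ k k' x x' a b,
      M ((k, x), a) ((k', x'), b) = if k = k' then B (x, a) (x', b) else 0) :
    M.det = B.det ^ Fintype.card κ := by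
  let σ : (κ × α) × β ≃ (α × β) × κ := (Equiv.prodAssoc κ α β).trans (Equiv.prodComm _ _)
  have hM' : M = (blockDiagonal fun _ : κ => B).submatrix σ σ := by
    ext ⟨⟨k, x⟩, a⟩ ⟨⟨k', x'⟩, b⟩
    simp [hM, σ, blockDiagonal_apply]
  rw [hM', det_submatrix_equiv_self, det_blockDiagonal, Finset.prod_const, Finset.card_univ]

end Matrix

theorem fine_fine_block_is_blockDiagonal_and_invertible_general
    (N Nc m : ℕ) (Φ : Matrix (Fin N) (Fin N) ℝ)
    (Nt : ℕ) (hNt : Nt = Nc * m + 1)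
    (A : Matrix (Fin Nt × Fin N) (Fin Nt × Fin N) ℝ)
    (hA : ∀ p q, A p q =
      if p.1 = q.1 then (if p.2 = q.2 then (1 : ℝ) else 0)
      else if p.1.val = q.1.val + 1 then -Φ p.2 q.2 else 0)
    (AFF : Matrix ((Fin Nc × Fin (m - 1)) × Fin N) ((Fin Nc × Fin (m - 1)) × Fin N) ℝ)
    (hAFF : ∀ p q, AFF p q = A (fineEmb Nc m Nt hNt p.1, p.2) (fineEmb Nc m Nt hNt q.1, q.2))
    (BΦ : Matrix (Fin (m - 1) × Fin N) (Fin (m - 1) × Fin N) ℝ)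
    (hBΦ : ∀ p q, BΦ p q =
      if p.1 = q.1 then (if p.2 = q.2 then (1 : ℝ) else 0)
      else if p.1.val = q.1.val + 1 then -Φ p.2 q.2 else 0) :
    (∀ (i i' : Fin Nc) (j j' : Fin (m - 1)) (a b : Fin N),
      AFF ((i, j), a) ((i', j'), b) = if i = i' then BΦ (j, a) (j', b) else 0)
    ∧ IsUnit AFF := by
  obtain rfl : A = Matrix.blockBidiagonal Nt Φ := Matrix.ext hA
  obtain rfl : BΦ = Matrix.blockBidiagonal (m - 1) Φ := Matrix.ext hBΦ
  have hentries : ∀ (i i' : Fin Nc) (j j' : Fin (m - 1)) (a b : Fin N),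
      AFF ((i, j), a) ((i', j'), b) =
        if i = i' then Matrix.blockBidiagonal (m - 1) Φ (j, a) (j', b) else 0 :=
    fun i i' j j' a b => (hAFF _ _).trans (Matrix.blockBidiagonal_fineEmb_apply hNt Φ ..)
  refine ⟨hentries, (Matrix.isUnit_iff_isUnit_det AFF).2 ?_⟩
  rw [Matrix.det_eq_det_pow_card_of_apply_eq_ite AFF _ hentries, Matrix.det_blockBidiagonal,
    one_pow]
  exact isUnit_one

/-- Restricting the block lower bidiagonal space-time matrix `A` (identity diagonal blocks,
`-Φ` subdiagonal blocks) to the fine nodes, grouped by time chunks of length `m-1`, yields a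
block diagonal matrix whose diagonal blocks are all the block lower bidiagonal matrix `BΦ`
with identity on the diagonal and `-Φ` on the subdiagonal; in particular `A_FF` is invertible. -/
theorem fine_fine_block_is_blockDiagonal_and_invertible
    (N Nc m : ℕ) (hm : 0 < m) (Φ : Matrix (Fin N) (Fin N) ℝ)
    (Nt : ℕ) (hNt : Nt = Nc * m + 1)
    (A : Matrix (Fin Nt × Fin N) (Fin Nt × Fin N) ℝ)
    (hA : ∀ p q, A p q =
      if p.1 = q.1 then (if p.2 = q.2 then (1 : ℝ) else 0)
      else if p.1.val = q.1.val + 1 then -Φ p.2 q.2 else 0)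
    (AFF : Matrix ((Fin Nc × Fin (m - 1)) × Fin N) ((Fin Nc × Fin (m - 1)) × Fin N) ℝ)
    (hAFF : ∀ p q, AFF p q = A (fineEmb Nc m Nt hNt p.1, p.2) (fineEmb Nc m Nt hNt q.1, q.2))
    (BΦ : Matrix (Fin (m - 1) × Fin N) (Fin (m - 1) × Fin N) ℝ)
    (hBΦ : ∀ p q, BΦ p q =
      if p.1 = q.1 then (if p.2 = q.2 then (1 : ℝ) else 0)
      else if p.1.val = q.1.val + 1 then -Φ p.2 q.2 else 0) :
    (∀ (i i' : Fin Nc) (j j' : Fin (m - 1)) (a b : Fin N),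
      AFF ((i, j), a) ((i', j'), b) = if i = i' then BΦ (j, a) (j', b) else 0)
    ∧ IsUnit AFF :=
  fine_fine_block_is_blockDiagonal_and_invertible_general N Nc m Φ Nt hNt A hA AFF hAFF BΦ hBΦ
end

section
/- If the map u ↦ u + Δt·A(u) (forward Euler) is nonexpansive in a norm ‖·‖ on a convex set (i.e., total variation diminishing: ‖v + Δt·A(v) - w - Δt·A(w)‖ ≤ ‖v - w‖), then the SSPRK3 map defined by u^{(1)} = u + Δt A(u), u^{(2)} = ¾u + ¼u^{(1)} + ¼Δt A(u^{(1)}), Ψ(u) = ⅓u + ⅔u^{(2)} + ⅔Δt A(u^{(2)}) is also nonexpansive in that norm, since it is a convex combination of forward Euler steps. -/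
/-! Writing `E u = u + Δt • A u`, the SSPRK3 map is `Ψ = ⅓ id + ⅔ E ∘ (¾ id + ¼ E ∘ E)`.
Maps with Lipschitz constant `1` are closed under composition and under convex combinations,
so `Ψ` inherits nonexpansiveness from the forward Euler step `E`. -/

open NNReal

theorem LipschitzWith.smul_add_smul {α E : Type*} [PseudoMetricSpace α]
    [SeminormedAddCommGroup E] [NormedSpace ℝ E] {f g : α → E} {K : ℝ≥0}
    (hf : LipschitzWith K f) (hg : LipschitzWith K g) {a b : ℝ} (ha : 0 ≤ a) (hb : 0 ≤ b)
    (hab : a + b = 1) : LipschitzWith K fun x ↦ a • f x + b • g x := by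
  have hsum := ((lipschitzWith_smul a).comp hf).add ((lipschitzWith_smul b).comp hg)
  have hK : ‖a‖₊ * K + ‖b‖₊ * K = K := by
    ext
    simp only [NNReal.coe_add, NNReal.coe_mul, coe_nnnorm, Real.norm_of_nonneg ha,
      Real.norm_of_nonneg hb, ← add_mul, hab, one_mul]
  rwa [hK] at hsum

theorem ssprk3_nonexpansive_general
    (V : Type*) [NormedAddCommGroup V] [NormedSpace ℝ V]
    (A : V → V) (Δt : ℝ)
    (E : V → V) (hE : ∀ u, E u = u + Δt • A u)
    (hnonexp : ∀ v w, ‖E v - E w‖ ≤ ‖v - w‖)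
    (Ψ : V → V)
    (hΨ : ∀ u, Ψ u =
      (1/3 : ℝ) • u
      + (2/3 : ℝ) • ((3/4 : ℝ) • u + (1/4 : ℝ) • (u + Δt • A u)
          + (1/4 : ℝ) • (Δt • A (u + Δt • A u)))
      + (2/3 : ℝ) • (Δt • A ((3/4 : ℝ) • u + (1/4 : ℝ) • (u + Δt • A u)
          + (1/4 : ℝ) • (Δt • A (u + Δt • A u)))) ) :
    ∀ v w, ‖Ψ v - Ψ w‖ ≤ ‖v - w‖ := by
  have hE₁ : LipschitzWith 1 E := .mk_one fun v w ↦ by simpa only [dist_eq_norm] using hnonexp v w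
  have hEE : LipschitzWith 1 (E ∘ E) := by simpa only [mul_one] using hE₁.comp hE₁
  set stage₂ : V → V := fun u ↦ (3/4 : ℝ) • u + (1/4 : ℝ) • E (E u)
  have hstage₂ : LipschitzWith 1 stage₂ :=
    LipschitzWith.id.smul_add_smul hEE (by norm_num) (by norm_num) (by norm_num)
  have hEstage₂ : LipschitzWith 1 (E ∘ stage₂) := by simpa only [mul_one] using hE₁.comp hstage₂
  have hstage₂_eq : ∀ u, (3/4 : ℝ) • u + (1/4 : ℝ) • (u + Δt • A u)
      + (1/4 : ℝ) • (Δt • A (u + Δt • A u)) = stage₂ u := fun u ↦ by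
    simp only [stage₂, hE]
    module
  have hΨ_eq : Ψ = fun u ↦ (1/3 : ℝ) • u + (2/3 : ℝ) • E (stage₂ u) := by
    funext u
    rw [hΨ, hstage₂_eq, hE (stage₂ u)]
    module
  have hΨ₁ : LipschitzWith 1 Ψ :=
    hΨ_eq ▸ LipschitzWith.id.smul_add_smul hEstage₂ (by norm_num) (by norm_num) (by norm_num)
  intro v w
  simpa only [NNReal.coe_one, one_mul] using hΨ₁.norm_sub_le v w

/-- If the forward Euler map `E(u) = u + Δt•A(u)` is nonexpansive in the norm of `V`,
then the SSPRK3 map is nonexpansive as well (it is a convex combination of Euler steps). -/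
theorem ssprk3_nonexpansive
    (V : Type*) [NormedAddCommGroup V] [NormedSpace ℝ V]
    (A : V → V) (Δt : ℝ) (hΔt : 0 < Δt)
    (E : V → V) (hE : ∀ u, E u = u + Δt • A u)
    (hnonexp : ∀ v w, ‖E v - E w‖ ≤ ‖v - w‖)
    (Ψ : V → V)
    (hΨ : ∀ u, Ψ u =
      (1/3 : ℝ) • u
      + (2/3 : ℝ) • ((3/4 : ℝ) • u + (1/4 : ℝ) • (u + Δt • A u)
          + (1/4 : ℝ) • (Δt • A (u + Δt • A u)))
      + (2/3 : ℝ) • (Δt • A ((3/4 : ℝ) • u + (1/4 : ℝ) • (u + Δt • A u)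
          + (1/4 : ℝ) • (Δt • A (u + Δt • A u)))) ) :
    ∀ v w, ‖Ψ v - Ψ w‖ ≤ ‖v - w‖ :=
  ssprk3_nonexpansive_general V A Δt E hE hnonexp Ψ hΨ
end

section
/- For the Euler flux Jacobian with eigenvalues u - c, u, u + c (c = √((γ-1)(H - u²/2)), H > u²/2), the vectors r₀ = (1, u - c, H - uc), r₁ = (1, u, u²/2), r₂ = (1, u + c, H + uc) are eigenvectors of the Jacobian and are linearly independent. -/
/-!
Both acoustic eigenpairs `(u ± c, r)` come from one identity, valid for every root `s` of
`s² = (γ-1)(H - u²/2)`: the eigenvector equations are polynomial identities modulo that relation.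
Independence follows from `det (r₀; r₁; r₂) = 2c(H - u²/2)`, which is nonzero since `c > 0` and
`H > u²/2`.
-/

open Matrix

noncomputable def eulerJacobian (γ u H : ℝ) : Matrix (Fin 3) (Fin 3) ℝ :=
  !![0, 1, 0;
    (γ - 3) * u ^ 2 / 2, (3 - γ) * u, γ - 1;
    u * ((γ - 1) * u ^ 2 / 2 - H), H - (γ - 1) * u ^ 2, γ * u]

lemma eulerJacobian_mulVec_acoustic {γ u H s : ℝ} (hs : s ^ 2 = (γ - 1) * (H - u ^ 2 / 2)) :
    eulerJacobian γ u H *ᵥ ![1, u + s, H + u * s] = (u + s) • ![1, u + s, H + u * s] := by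
  simp only [eulerJacobian, cons_mulVec, smul_vec3, vec3_dotProduct', empty_mulVec]
  refine vec3_eq ?_ ?_ ?_
  · ring
  · linear_combination -hs
  · linear_combination -u * hs

lemma eulerJacobian_mulVec_entropy (γ u H : ℝ) :
    eulerJacobian γ u H *ᵥ ![1, u, u ^ 2 / 2] = u • ![1, u, u ^ 2 / 2] := by
  simp only [eulerJacobian, cons_mulVec, smul_vec3, vec3_dotProduct', empty_mulVec]
  refine vec3_eq ?_ ?_ ?_ <;> ring

lemma det_eulerEigenvectors (u c H : ℝ) :
    !![1, u - c, H - u * c; 1, u, u ^ 2 / 2; 1, u + c, H + u * c].det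
      = 2 * c * (H - u ^ 2 / 2) := by
  rw [det_fin_three]
  simp only [of_apply, cons_val', cons_val_zero, cons_val_fin_one, cons_val_one, cons_val]
  ring

lemma linearIndependent_eulerEigenvectors {u c H : ℝ} (hc : c ≠ 0) (hH : H ≠ u ^ 2 / 2) :
    LinearIndependent ℝ ![![1, u - c, H - u * c], ![1, u, u ^ 2 / 2], ![1, u + c, H + u * c]] := by
  have hdet : IsUnit !![1, u - c, H - u * c; 1, u, u ^ 2 / 2; 1, u + c, H + u * c].det := by
    rw [det_eulerEigenvectors]
    exact (mul_ne_zero (mul_ne_zero two_ne_zero hc) (sub_ne_zero.mpr hH)).isUnit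
  exact linearIndependent_rows_iff_isUnit.mpr ((isUnit_iff_isUnit_det _).mpr hdet)

/-- For the Euler flux Jacobian (with `c² = (γ-1)(H - u²/2) > 0`), the vectors
`r₀ = (1, u-c, H-uc)`, `r₁ = (1, u, u²/2)`, `r₂ = (1, u+c, H+uc)` are eigenvectors
associated with the eigenvalues `u-c`, `u`, `u+c`, and they are linearly independent. -/
theorem euler_eigenvectors_linearIndependent
    (γ u H : ℝ) (hγ : 1 < γ) (hH : u ^ 2 / 2 < H)
    (c : ℝ) (hc : c = Real.sqrt ((γ - 1) * (H - u ^ 2 / 2)))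
    (J : Matrix (Fin 3) (Fin 3) ℝ)
    (hJ : J = !![0, 1, 0;
      (γ - 3) * u ^ 2 / 2, (3 - γ) * u, γ - 1;
      u * ((γ - 1) * u ^ 2 / 2 - H), H - (γ - 1) * u ^ 2, γ * u])
    (r0 r1 r2 : Fin 3 → ℝ)
    (hr0 : r0 = ![1, u - c, H - u * c])
    (hr1 : r1 = ![1, u, u ^ 2 / 2])
    (hr2 : r2 = ![1, u + c, H + u * c]) :
    J.mulVec r0 = (u - c) • r0
    ∧ J.mulVec r1 = u • r1
    ∧ J.mulVec r2 = (u + c) • r2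
    ∧ LinearIndependent ℝ ![r0, r1, r2] := by
  have hpos : 0 < (γ - 1) * (H - u ^ 2 / 2) := mul_pos (sub_pos.mpr hγ) (sub_pos.mpr hH)
  have hc_sq : c ^ 2 = (γ - 1) * (H - u ^ 2 / 2) := by rw [hc, Real.sq_sqrt hpos.le]
  have hc_ne : c ≠ 0 := by rw [hc]; exact (Real.sqrt_pos.mpr hpos).ne'
  subst hr0 hr1 hr2
  change J = eulerJacobian γ u H at hJ
  subst hJ
  refine ⟨?_, eulerJacobian_mulVec_entropy γ u H, eulerJacobian_mulVec_acoustic hc_sq,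
    linearIndependent_eulerEigenvectors hc_ne hH.ne'⟩
  simpa [sub_eq_add_neg] using eulerJacobian_mulVec_acoustic (s := -c) (by rwa [neg_sq])
end

section
/- If each candidate reconstruction satisfies q^r = q* + O(Δx^{k+1}) and the weights satisfy ω^r = d_r + O(Δx^{k}) with Σ_r ω^r = Σ_r d_r = 1, and the linear combination satisfies Σ_r d_r q^r = q* + O(Δx^{2k+1}), then the WENO reconstruction Σ_r ω^r q^r equals q* + O(Δx^{2k+1}). -/
open Finset

/-!
Since the weights `ω^r` and `d_r` both sum to one, their differences sum to zero, so
`Σ ω^r q^r - q* = Σ (ω^r - d_r)(q^r - q*) + (Σ d_r q^r - q*)`. Each product in the first sum is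
`O(Δx^k) · O(Δx^{k+1}) = O(Δx^{2k+1})`, and the second term is `O(Δx^{2k+1})` by assumption.
-/

theorem Finset.sum_mul_sub_eq_sum_sub_mul_sub_add {ι R : Type*} [CommRing R] (s : Finset ι)
    (w d q : ι → R) (x : R) (hsum : ∑ i ∈ s, w i = ∑ i ∈ s, d i) :
    ∑ i ∈ s, w i * q i - x = ∑ i ∈ s, (w i - d i) * (q i - x) + (∑ i ∈ s, d i * q i - x) := by
  have hdiff : ∑ i ∈ s, (w i - d i) * x = 0 := by
    rw [← sum_mul, sum_sub_distrib, hsum, sub_self, zero_mul]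
  simp only [sub_mul, mul_sub, sum_sub_distrib] at hdiff ⊢
  linear_combination hdiff

theorem Finset.abs_sum_mul_sub_le {ι : Type*} (s : Finset ι) (w d q : ι → ℝ) (x A B E : ℝ)
    (hsum : ∑ i ∈ s, w i = ∑ i ∈ s, d i)
    (hw : ∀ i ∈ s, |w i - d i| ≤ A) (hq : ∀ i ∈ s, |q i - x| ≤ B)
    (hlin : |∑ i ∈ s, d i * q i - x| ≤ E) :
    |∑ i ∈ s, w i * q i - x| ≤ #s * (A * B) + E := by
  have hterm : ∀ i ∈ s, |(w i - d i) * (q i - x)| ≤ A * B := fun i hi => by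
    rw [abs_mul]
    exact mul_le_mul (hw i hi) (hq i hi) (abs_nonneg _) ((abs_nonneg _).trans (hw i hi))
  calc |∑ i ∈ s, w i * q i - x|
      = |∑ i ∈ s, (w i - d i) * (q i - x) + (∑ i ∈ s, d i * q i - x)| := by
        rw [sum_mul_sub_eq_sum_sub_mul_sub_add s w d q x hsum]
    _ ≤ ∑ i ∈ s, |(w i - d i) * (q i - x)| + |∑ i ∈ s, d i * q i - x| :=
        (abs_add_le _ _).trans (add_le_add_left (abs_sum_le_sum_abs _ _) _)
    _ ≤ #s * (A * B) + E := by
        gcongr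
        simpa using sum_le_sum hterm

/-- WENO accuracy: if each candidate reconstruction is `q* + O(Δx^{k+1})`, the weights
satisfy `ω^r = d_r + O(Δx^k)` with `Σω^r = Σd_r = 1`, and the linear combination is
`q* + O(Δx^{2k+1})`, then the WENO reconstruction `Σ ω^r q^r` is `q* + O(Δx^{2k+1})`. -/
theorem weno_reconstruction_order
    (k : ℕ) (C : ℝ) (d : Fin (k + 1) → ℝ)
    (qstar : ℝ → ℝ) (q ω : Fin (k + 1) → ℝ → ℝ)
    (hdsum : ∑ r, d r = 1)
    (hq : ∀ r, ∀ Δx : ℝ, 0 < Δx → |q r Δx - qstar Δx| ≤ C * Δx ^ (k + 1))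
    (hω : ∀ r, ∀ Δx : ℝ, 0 < Δx → |ω r Δx - d r| ≤ C * Δx ^ k)
    (hωsum : ∀ Δx : ℝ, 0 < Δx → ∑ r, ω r Δx = 1)
    (hlin : ∀ Δx : ℝ, 0 < Δx → |(∑ r, d r * q r Δx) - qstar Δx| ≤ C * Δx ^ (2 * k + 1)) :
    ∃ C' : ℝ, ∀ Δx : ℝ, 0 < Δx →
      |(∑ r, ω r Δx * q r Δx) - qstar Δx| ≤ C' * Δx ^ (2 * k + 1) := by
  refine ⟨(k + 1) * (C * C) + C, fun Δx hΔx => ?_⟩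
  refine (abs_sum_mul_sub_le univ (ω · Δx) d (q · Δx) (qstar Δx)
    (C * Δx ^ k) (C * Δx ^ (k + 1)) (C * Δx ^ (2 * k + 1))
    (by rw [hωsum Δx hΔx, hdsum]) (fun r _ => hω r Δx hΔx) (fun r _ => hq r Δx hΔx)
    (hlin Δx hΔx)).trans_eq ?_
  rw [card_univ, Fintype.card_fin]
  push_cast
  ring
end
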